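/- (Deterministic core of Proposition 1.) Let p̂_S, p̂_T, a_S, a_T, b_S, b_T ∈ [0,1], let p ∈ (0,1), and let ε ≥ 0, C ≥ 0. Define oer_S = p̂_S·a_S + (1 − p̂_S)·b_S, oer_T = p̂_T·a_T + (1 − p̂_T)·b_T, Δ_S = p̂_S·a_S − (1 − p̂_S)·b_S, and Δ_T = p̂_T·a_T − (1 − p̂_T)·b_T. Suppose (i) oer_T ≤ oer_S − ε, (ii) |p̂_S − p| ≤ C, (iii) |p̂_T − p| ≤ C, and (iv) |a_T − a_S| ≤ ε. Then −Δ_T ≤ −Δ_S + ε + 4C. -/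

import Mathlib

/-! Since `-Δ = oer - 2·p̂·a`, hypothesis (i) reduces the claim to `p̂_S·a_S - p̂_T·a_T ≤ ε + 2C`,
and splitting `p̂_S·a_S - p̂_T·a_T = p̂_S·(a_S - a_T) + (p̂_S - p̂_T)·a_T` bounds the two terms by
`|a_T - a_S| ≤ ε` and `|p̂_S - p̂_T| ≤ 2C`, using that `p̂_S` and `a_T` lie in `[0, 1]`. -/

open Set

lemma mul_sub_mul_le_abs_sub_add_abs_sub {x y a b : ℝ} (hx : x ∈ Icc (0 : ℝ) 1)
    (hb : b ∈ Icc (0 : ℝ) 1) : x * a - y * b ≤ |a - b| + |x - y| := by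
  have hxa : x * (a - b) ≤ |a - b| :=
    calc x * (a - b) ≤ x * |a - b| := mul_le_mul_of_nonneg_left (le_abs_self _) hx.1
      _ ≤ |a - b| := mul_le_of_le_one_left (abs_nonneg _) hx.2
  have hyb : (x - y) * b ≤ |x - y| :=
    calc (x - y) * b ≤ |x - y| * b := mul_le_mul_of_nonneg_right (le_abs_self _) hb.1
      _ ≤ |x - y| := mul_le_of_le_one_right (abs_nonneg _) hb.2
  linarith

theorem gap_control_general
    (pS pT aS aT bS bT : ℝ)
    (hpS : pS ∈ Set.Icc (0 : ℝ) 1)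
    (haT : aT ∈ Set.Icc (0 : ℝ) 1)
    (p : ℝ)
    (ε C : ℝ)
    (h1 : pT * aT + (1 - pT) * bT ≤ pS * aS + (1 - pS) * bS - ε)
    (h2 : |pS - p| ≤ C)
    (h3 : |pT - p| ≤ C)
    (h4 : |aT - aS| ≤ ε) :
    -(pT * aT - (1 - pT) * bT) ≤ -(pS * aS - (1 - pS) * bS) + ε + 4 * C := by
  have hp : |pS - pT| ≤ 2 * C :=
    calc |pS - pT| ≤ |pS - p| + |p - pT| := abs_sub_le _ _ _
      _ ≤ 2 * C := by rw [abs_sub_comm p]; linarith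
  have ha : |aS - aT| ≤ ε := abs_sub_comm aS aT ▸ h4
  have hprod := mul_sub_mul_le_abs_sub_add_abs_sub (y := pT) (a := aS) hpS haT
  linarith

/-- Deterministic core of Proposition 1: with
`oer_S = p̂_S·a_S + (1 − p̂_S)·b_S`, `oer_T = p̂_T·a_T + (1 − p̂_T)·b_T`,
`Δ_S = p̂_S·a_S − (1 − p̂_S)·b_S`, `Δ_T = p̂_T·a_T − (1 − p̂_T)·b_T`,
if `oer_T ≤ oer_S − ε`, `|p̂_S − p| ≤ C`, `|p̂_T − p| ≤ C`, and `|a_T − a_S| ≤ ε`,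
then `−Δ_T ≤ −Δ_S + ε + 4C`. -/
theorem gap_control
    (pS pT aS aT bS bT : ℝ)
    (hpS : pS ∈ Set.Icc (0 : ℝ) 1) (hpT : pT ∈ Set.Icc (0 : ℝ) 1)
    (haS : aS ∈ Set.Icc (0 : ℝ) 1) (haT : aT ∈ Set.Icc (0 : ℝ) 1)
    (hbS : bS ∈ Set.Icc (0 : ℝ) 1) (hbT : bT ∈ Set.Icc (0 : ℝ) 1)
    (p : ℝ) (hp0 : 0 < p) (hp1 : p < 1)
    (ε C : ℝ) (hε : 0 ≤ ε) (hC : 0 ≤ C)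
    (h1 : pT * aT + (1 - pT) * bT ≤ pS * aS + (1 - pS) * bS - ε)
    (h2 : |pS - p| ≤ C)
    (h3 : |pT - p| ≤ C)
    (h4 : |aT - aS| ≤ ε) :
    -(pT * aT - (1 - pT) * bT) ≤ -(pS * aS - (1 - pS) * bS) + ε + 4 * C :=
  gap_control_general pS pT aS aT bS bT hpS haT p ε C h1 h2 h3 h4
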